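/- arXiv:2305.17278 — 4 statements merged into one kernel-verified Lean document; each statement's English description precedes it below -/
import Mathlib

section
/- Let c_m(c_1) ∈ Q[c_1] be defined by c_0 = 1, c_1 the indeterminate, and for m ≥ 2 by (m² − 1)·c_m = Σ_{p=0}^{m−2} (p+2)(m−2(p+1))·c_{p+1}·c_{m−p−1} + 4·Σ_{p=0}^{m−2} Σ_{p₁=0}^{p} c_{m−p−2}·c_{p₁}·c_{p−p₁}. Then for every m ≥ 0, the polynomial c_m has the same parity as m: if m is even then c_m(−t) = c_m(t), and if m is odd then c_m(−t) = −c_m(t). -/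
open Polynomial Finset in
/-- The recurrence defining the Taylor coefficients `c_m(c_1)` of the vanishing
meromorphic solution of the degenerate third Painlevé equation at `a = ± i/2`:
`c_0 = 1`, `c_1` is the indeterminate, and for `m ≥ 2`,
`(m² − 1) c_m = Σ_{p=0}^{m−2} (p+2)(m−2(p+1)) c_{p+1} c_{m−p−1}
  + 4 Σ_{p=0}^{m−2} Σ_{p₁=0}^{p} c_{m−p−2} c_{p₁} c_{p−p₁}`. -/
def PIIIRec (c : ℕ → Polynomial ℚ) : Prop :=
  c 0 = 1 ∧ c 1 = X ∧
    ∀ m : ℕ, 2 ≤ m →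
      C ((m : ℚ) ^ 2 - 1) * c m =
        (∑ p ∈ Finset.range (m - 1),
            C (((p : ℚ) + 2) * ((m : ℚ) - 2 * ((p : ℚ) + 1))) * (c (p + 1) * c (m - p - 1)))
          + 4 * ∑ p ∈ Finset.range (m - 1), ∑ p₁ ∈ Finset.range (p + 1),
              c (m - p - 2) * c p₁ * c (p - p₁)

open Polynomial Finset in
lemma cm_parity_key (c : ℕ → Polynomial ℚ) (hc : PIIIRec c) :
    ∀ m : ℕ, ∀ t : ℚ, (c m).eval (-t) = (-1 : ℚ) ^ m * (c m).eval t := by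
  obtain ⟨h0, h1, hrec⟩ := hc
  intro m
  induction m using Nat.strong_induction_on with
  | _ m IH =>
    intro t
    match m, IH with
    | 0, _ => simp [h0]
    | 1, _ => simp [h1]
    | (m + 2), IH =>
      set n := m + 2 with hn
      have hn2 : 2 ≤ n := by omega
      have hne : ((n : ℚ) ^ 2 - 1) ≠ 0 := by
        have : (2 : ℚ) ≤ (n : ℚ) := by exact_mod_cast hn2
        nlinarith
      have hr := hrec n hn2
      have hA := congrArg (eval (-t)) hr
      have hB := congrArg (eval t) hr
      simp only [eval_mul, eval_add, eval_C, eval_finset_sum, eval_ofNat] at hA hB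
      have key1 : (∑ p ∈ Finset.range (n - 1),
            ((p : ℚ) + 2) * ((n : ℚ) - 2 * ((p : ℚ) + 1)) *
              (eval (-t) (c (p + 1)) * eval (-t) (c (n - p - 1))))
          = (-1 : ℚ) ^ n * ∑ p ∈ Finset.range (n - 1),
            ((p : ℚ) + 2) * ((n : ℚ) - 2 * ((p : ℚ) + 1)) *
              (eval t (c (p + 1)) * eval t (c (n - p - 1))) := by
        rw [Finset.mul_sum]
        refine Finset.sum_congr rfl fun p hp => ?_
        rw [Finset.mem_range] at hp
        have e1 : (p + 1) < n := by omega
        have e2 : (n - p - 1) < n := by omega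
        have hpow : (-1 : ℚ) ^ (p + 1) * (-1 : ℚ) ^ (n - p - 1) = (-1 : ℚ) ^ n := by
          rw [← pow_add]; congr 1; omega
        simp only [IH _ e1, IH _ e2]
        linear_combination ((((p : ℚ) + 2) * ((n : ℚ) - 2 * ((p : ℚ) + 1))) *
          eval t (c (p + 1)) * eval t (c (n - p - 1))) * hpow
      have key2 : (∑ p ∈ Finset.range (n - 1), ∑ p₁ ∈ Finset.range (p + 1),
            eval (-t) (c (n - p - 2)) * eval (-t) (c p₁) * eval (-t) (c (p - p₁)))
          = (-1 : ℚ) ^ n * ∑ p ∈ Finset.range (n - 1), ∑ p₁ ∈ Finset.range (p + 1),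
            eval t (c (n - p - 2)) * eval t (c p₁) * eval t (c (p - p₁)) := by
        rw [Finset.mul_sum]
        refine Finset.sum_congr rfl fun p hp => ?_
        rw [Finset.mem_range] at hp
        rw [Finset.mul_sum]
        refine Finset.sum_congr rfl fun p₁ hp₁ => ?_
        rw [Finset.mem_range] at hp₁
        have e1 : (n - p - 2) < n := by omega
        have e2 : p₁ < n := by omega
        have e3 : (p - p₁) < n := by omega
        have hpow : (-1 : ℚ) ^ (n - p - 2) * (-1 : ℚ) ^ p₁ * (-1 : ℚ) ^ (p - p₁)
            = (-1 : ℚ) ^ n := by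
          rw [← pow_add, ← pow_add,
            show n - p - 2 + p₁ + (p - p₁) = n - 2 from by omega]
          conv_rhs => rw [show n = (n - 2) + 2 from by omega]
          rw [pow_add]; ring
        simp only [IH _ e1, IH _ e2, IH _ e3]
        linear_combination (eval t (c (n - p - 2)) * eval t (c p₁) * eval t (c (p - p₁))) * hpow
      rw [key1, key2] at hA
      have h' : ((n : ℚ) ^ 2 - 1) * eval (-t) (c n)
          = ((n : ℚ) ^ 2 - 1) * ((-1 : ℚ) ^ n * eval t (c n)) := by
        linear_combination hA - ((-1 : ℚ) ^ n) * hB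
      exact mul_left_cancel₀ hne h'

theorem cm_parity (c : ℕ → Polynomial ℚ) (hc : PIIIRec c) (m : ℕ) :
    (Even m → ∀ t : ℚ, (c m).eval (-t) = (c m).eval t) ∧
      (Odd m → ∀ t : ℚ, (c m).eval (-t) = -(c m).eval t) := by
  constructor
  · intro hm t
    rw [cm_parity_key c hc m t, hm.neg_one_pow, one_mul]
  · intro hm t
    rw [cm_parity_key c hc m t, hm.neg_one_pow, neg_one_mul]
end

section
/- For any constants C_1, C_2, the function A(z) = −C_2·C_1²·z^{C_1} / (2z²·(1 + C_2·z^{C_1})²) satisfies (z·A'(z)/A(z))' = 4·z·A(z) wherever it is defined and nonzero. -/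
open Real

private lemma hasDerivAt_A (C₁ C₂ : ℝ) (w : ℝ) (hw : 0 < w) (hd : 1 + C₂ * w ^ C₁ ≠ 0) :
    HasDerivAt (fun v : ℝ =>
        -C₂ * C₁ ^ 2 * v ^ C₁ / (2 * v ^ 2 * (1 + C₂ * v ^ C₁) ^ 2))
      ((-C₂ * C₁ ^ 2 * (C₁ * w ^ (C₁ - 1)) * (2 * w ^ 2 * (1 + C₂ * w ^ C₁) ^ 2)
          - -C₂ * C₁ ^ 2 * w ^ C₁ *
            (2 * ((2:ℕ) * w ^ (2-1)) * (1 + C₂ * w ^ C₁) ^ 2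
              + 2 * w ^ 2 * ((2:ℕ) * (1 + C₂ * w ^ C₁) ^ (2-1) * (C₂ * (C₁ * w ^ (C₁ - 1))))))
        / (2 * w ^ 2 * (1 + C₂ * w ^ C₁) ^ 2) ^ 2) w := by
  have hpow : HasDerivAt (fun v : ℝ => v ^ C₁) (C₁ * w ^ (C₁ - 1)) w :=
    Real.hasDerivAt_rpow_const (Or.inl hw.ne')
  have hN : HasDerivAt (fun v : ℝ => -C₂ * C₁ ^ 2 * v ^ C₁)
      (-C₂ * C₁ ^ 2 * (C₁ * w ^ (C₁ - 1))) w := hpow.const_mul _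
  have h1 : HasDerivAt (fun v : ℝ => 1 + C₂ * v ^ C₁) (C₂ * (C₁ * w ^ (C₁ - 1))) w :=
    (hpow.const_mul _).const_add 1
  have hv2 : HasDerivAt (fun v : ℝ => 2 * v ^ 2) (2 * ((2:ℕ) * w ^ (2-1))) w :=
    (hasDerivAt_pow 2 w).const_mul 2
  have hD := hv2.mul (h1.pow 2)
  have hDne : 2 * w ^ 2 * (1 + C₂ * w ^ C₁) ^ 2 ≠ 0 := by positivity
  exact hN.div hD hDne

open Real in
theorem general_solution_A0_equation (C₁ C₂ : ℝ) :
    ∀ z : ℝ, 0 < z → 1 + C₂ * z ^ C₁ ≠ 0 →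
      (-C₂ * C₁ ^ 2 * z ^ C₁ / (2 * z ^ 2 * (1 + C₂ * z ^ C₁) ^ 2)) ≠ 0 →
      HasDerivAt
        (fun w : ℝ =>
          w * deriv (fun v : ℝ =>
              -C₂ * C₁ ^ 2 * v ^ C₁ / (2 * v ^ 2 * (1 + C₂ * v ^ C₁) ^ 2)) w /
            (-C₂ * C₁ ^ 2 * w ^ C₁ / (2 * w ^ 2 * (1 + C₂ * w ^ C₁) ^ 2)))
        (4 * z * (-C₂ * C₁ ^ 2 * z ^ C₁ / (2 * z ^ 2 * (1 + C₂ * z ^ C₁) ^ 2))) z := by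
  intro z hz hdz hA
  -- extract C₁ ≠ 0 and C₂ ≠ 0
  have hC : C₂ ≠ 0 ∧ C₁ ≠ 0 := by
    constructor <;> rintro rfl <;> simp at hA
  obtain ⟨hC₂, hC₁⟩ := hC
  -- the nice form g
  set g : ℝ → ℝ := fun w => C₁ - 2 - 2 * C₁ * C₂ * w ^ C₁ / (1 + C₂ * w ^ C₁) with hg_def
  have hpow : HasDerivAt (fun v : ℝ => v ^ C₁) (C₁ * z ^ (C₁ - 1)) z :=
    Real.hasDerivAt_rpow_const (Or.inl hz.ne')
  have hq : HasDerivAt (fun w : ℝ => 2 * C₁ * C₂ * w ^ C₁ / (1 + C₂ * w ^ C₁))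
      ((2 * C₁ * C₂ * (C₁ * z ^ (C₁ - 1)) * (1 + C₂ * z ^ C₁)
        - 2 * C₁ * C₂ * z ^ C₁ * (C₂ * (C₁ * z ^ (C₁ - 1))))
        / (1 + C₂ * z ^ C₁) ^ 2) z :=
    (hpow.const_mul _).div ((hpow.const_mul _).const_add 1) hdz
  have hg : HasDerivAt g
      (-((2 * C₁ * C₂ * (C₁ * z ^ (C₁ - 1)) * (1 + C₂ * z ^ C₁)
        - 2 * C₁ * C₂ * z ^ C₁ * (C₂ * (C₁ * z ^ (C₁ - 1))))
        / (1 + C₂ * z ^ C₁) ^ 2)) z := hq.const_sub (C₁ - 2)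
  -- value of derivative matches
  have hs : z ^ (C₁ - 1) = z ^ C₁ / z := by
    rw [Real.rpow_sub hz, Real.rpow_one]
  have hval : -((2 * C₁ * C₂ * (C₁ * z ^ (C₁ - 1)) * (1 + C₂ * z ^ C₁)
        - 2 * C₁ * C₂ * z ^ C₁ * (C₂ * (C₁ * z ^ (C₁ - 1))))
        / (1 + C₂ * z ^ C₁) ^ 2)
      = 4 * z * (-C₂ * C₁ ^ 2 * z ^ C₁ / (2 * z ^ 2 * (1 + C₂ * z ^ C₁) ^ 2)) := by
    rw [hs]
    field_simp
    ring
  rw [← hval]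
  -- eventual equality of the two functions
  have heq : (fun w : ℝ =>
          w * deriv (fun v : ℝ =>
              -C₂ * C₁ ^ 2 * v ^ C₁ / (2 * v ^ 2 * (1 + C₂ * v ^ C₁) ^ 2)) w /
            (-C₂ * C₁ ^ 2 * w ^ C₁ / (2 * w ^ 2 * (1 + C₂ * w ^ C₁) ^ 2))) =ᶠ[nhds z] g := by
    have h1 : ∀ᶠ w in nhds z, 0 < w := eventually_gt_nhds hz
    have hcont : ContinuousAt (fun w : ℝ => 1 + C₂ * w ^ C₁) z := by
      exact ((Real.continuousAt_rpow_const z C₁ (Or.inl hz.ne')).const_mul C₂).const_add 1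
    have h2 : ∀ᶠ w in nhds z, 1 + C₂ * w ^ C₁ ≠ 0 := hcont.eventually_ne hdz
    filter_upwards [h1, h2] with w hw hdw
    have hderiv := (hasDerivAt_A C₁ C₂ w hw hdw).deriv
    rw [hderiv, hg_def]
    have hs' : w ^ (C₁ - 1) = w ^ C₁ / w := by
      rw [Real.rpow_sub hw, Real.rpow_one]
    have ht : w ^ C₁ ≠ 0 := (Real.rpow_pos_of_pos hw C₁).ne'
    rw [hs']
    field_simp
    ring
  exact hg.congr_of_eventuallyEq heq
end

section
/- For any constants C_3, C_4, the function h(z) = C_3·z(2z³ + 9)/(2z³ − 9)³ + C_4·z(2z³·ln z + 9·ln z + 12)/(2z³ − 9)³ satisfies the homogeneous linear equation (z·(h/A_0)')' − 4·z·h = 0, where A_0(z) = z/(1 − 2z³/9)². -/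
/-- The leading generating function `A₀(z) = z / (1 − 2z³/9)²`. -/
noncomputable def A0 (z : ℝ) : ℝ := z / (1 - 2 * z ^ 3 / 9) ^ 2

open Real in
theorem homogeneous_solution (C₃ C₄ : ℝ) :
    ∀ z : ℝ, 0 < z → 2 * z ^ 3 ≠ 9 →
      HasDerivAt
        (fun w : ℝ =>
          w * deriv (fun v : ℝ =>
              (C₃ * (v * (2 * v ^ 3 + 9) / (2 * v ^ 3 - 9) ^ 3)
                + C₄ * (v * (2 * v ^ 3 * Real.log v + 9 * Real.log v + 12)
                    / (2 * v ^ 3 - 9) ^ 3)) / A0 v) w)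
        (4 * z *
          (C₃ * (z * (2 * z ^ 3 + 9) / (2 * z ^ 3 - 9) ^ 3)
            + C₄ * (z * (2 * z ^ 3 * Real.log z + 9 * Real.log z + 12)
                / (2 * z ^ 3 - 9) ^ 3))) z := by
  intro z hz hne
  -- the open set where everything is nice
  set U : Set ℝ := {v | 0 < v ∧ 2 * v ^ 3 ≠ 9} with hUdef
  have hU : IsOpen U := by
    have : U = Set.Ioi (0:ℝ) ∩ ((fun v : ℝ => 2 * v ^ 3) ⁻¹' {(9:ℝ)})ᶜ := by
      ext v; simp [hUdef, Set.mem_setOf_eq, and_comm]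
    rw [this]
    exact isOpen_Ioi.inter ((isOpen_compl_singleton.preimage (by continuity)))
  have hzU : z ∈ U := ⟨hz, hne⟩
  -- the original function
  set f : ℝ → ℝ := fun v : ℝ =>
      (C₃ * (v * (2 * v ^ 3 + 9) / (2 * v ^ 3 - 9) ^ 3)
        + C₄ * (v * (2 * v ^ 3 * Real.log v + 9 * Real.log v + 12)
            / (2 * v ^ 3 - 9) ^ 3)) / A0 v with hfdef
  -- simplified form of f on U
  set g : ℝ → ℝ := fun v =>
      (C₃ * (2 * v ^ 3 + 9) + C₄ * ((2 * v ^ 3 + 9) * Real.log v + 12))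
        / (81 * (2 * v ^ 3 - 9)) with hgdef
  have hfg : ∀ v ∈ U, f v = g v := by
    rintro v ⟨hv0, hv9⟩
    have hvne : v ≠ 0 := ne_of_gt hv0
    have h2 : (2 * v ^ 3 - 9) ≠ 0 := sub_ne_zero.mpr hv9
    have h3 : (1 - 2 * v ^ 3 / 9) ≠ 0 := by
      intro h
      apply hv9
      have := sub_eq_zero.mp h
      linarith [this]
    have h4 : (1 - 2 * v ^ 3 / 9) = -(2 * v ^ 3 - 9) / 9 := by ring
    simp only [hfdef, hgdef, A0]
    rw [h4]
    field_simp
    ring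
  -- derivative of g on U
  have hgd : ∀ w ∈ U, HasDerivAt g
      (((C₃ * (6 * w ^ 2) + C₄ * ((6 * w ^ 2) * Real.log w + (2 * w ^ 3 + 9) * w⁻¹))
          * (81 * (2 * w ^ 3 - 9))
        - (C₃ * (2 * w ^ 3 + 9) + C₄ * ((2 * w ^ 3 + 9) * Real.log w + 12))
          * (81 * (2 * (3 * w ^ 2))))
        / (81 * (2 * w ^ 3 - 9)) ^ 2) w := by
    rintro w ⟨hw0, hw9⟩
    have hwne : w ≠ 0 := ne_of_gt hw0
    have h2 : (2 * w ^ 3 - 9) ≠ 0 := sub_ne_zero.mpr hw9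
    have hpow : HasDerivAt (fun v : ℝ => v ^ 3) (3 * w ^ 2) w := by
      simpa using hasDerivAt_pow 3 w
    have h1 : HasDerivAt (fun v : ℝ => 2 * v ^ 3 + 9) (6 * w ^ 2) w := by
      have := (hpow.const_mul 2).add_const 9
      simpa [mul_comm, mul_assoc, mul_left_comm] using this.congr_deriv (by ring)
    have hlog : HasDerivAt Real.log w⁻¹ w := Real.hasDerivAt_log hwne
    have h2' : HasDerivAt (fun v : ℝ => (2 * v ^ 3 + 9) * Real.log v)
        ((6 * w ^ 2) * Real.log w + (2 * w ^ 3 + 9) * w⁻¹) w := h1.mul hlog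
    have hNum : HasDerivAt
        (fun v : ℝ => C₃ * (2 * v ^ 3 + 9) + C₄ * ((2 * v ^ 3 + 9) * Real.log v + 12))
        (C₃ * (6 * w ^ 2) + C₄ * ((6 * w ^ 2) * Real.log w + (2 * w ^ 3 + 9) * w⁻¹)) w :=
      (h1.const_mul C₃).add ((h2'.add_const 12).const_mul C₄)
    have hDen : HasDerivAt (fun v : ℝ => 81 * (2 * v ^ 3 - 9)) (81 * (2 * (3 * w ^ 2))) w :=
      ((hpow.const_mul 2).sub_const 9).const_mul 81
    have hden_ne : 81 * (2 * w ^ 3 - 9) ≠ 0 := by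
      simp [h2]
    exact hNum.div hDen hden_ne
  -- f has the same derivative on U
  have hfd : ∀ w ∈ U, deriv f w =
      ((C₃ * (6 * w ^ 2) + C₄ * ((6 * w ^ 2) * Real.log w + (2 * w ^ 3 + 9) * w⁻¹))
          * (81 * (2 * w ^ 3 - 9))
        - (C₃ * (2 * w ^ 3 + 9) + C₄ * ((2 * w ^ 3 + 9) * Real.log w + 12))
          * (81 * (2 * (3 * w ^ 2))))
        / (81 * (2 * w ^ 3 - 9)) ^ 2 := by
    intro w hw
    have heq : f =ᶠ[nhds w] g :=
      Filter.eventuallyEq_of_mem (hU.mem_nhds hw) hfg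
    have : HasDerivAt f _ w := (hgd w hw).congr_of_eventuallyEq heq
    exact this.deriv
  -- the explicit simplified form of w * deriv f w
  set F : ℝ → ℝ := fun w =>
      (-(108 * C₃) * w ^ 3 - 108 * C₄ * (w ^ 3 * Real.log w)
        + C₄ * (4 * w ^ 6 - 72 * w ^ 3 - 81)) / (81 * (2 * w ^ 3 - 9) ^ 2) with hFdef
  have hFf : (fun w : ℝ => w * deriv f w) =ᶠ[nhds z] F := by
    apply Filter.eventuallyEq_of_mem (hU.mem_nhds hzU)
    rintro w hw
    have hw0 := hw.1
    have hwne : w ≠ 0 := ne_of_gt hw0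
    have h2 : (2 * w ^ 3 - 9) ≠ 0 := sub_ne_zero.mpr hw.2
    simp only [hfd w hw, hFdef]
    field_simp
    ring
  -- derivative of F at z
  have hzne : z ≠ 0 := ne_of_gt hz
  have h2z : (2 * z ^ 3 - 9) ≠ 0 := sub_ne_zero.mpr hne
  have hpow : HasDerivAt (fun v : ℝ => v ^ 3) (3 * z ^ 2) z := by
    simpa using hasDerivAt_pow 3 z
  have hpow6 : HasDerivAt (fun v : ℝ => v ^ 6) (6 * z ^ 5) z := by
    simpa using hasDerivAt_pow 6 z
  have hlog : HasDerivAt Real.log z⁻¹ z := Real.hasDerivAt_log hzne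
  have hM : HasDerivAt
      (fun w : ℝ => -(108 * C₃) * w ^ 3 - 108 * C₄ * (w ^ 3 * Real.log w)
        + C₄ * (4 * w ^ 6 - 72 * w ^ 3 - 81))
      (-(108 * C₃) * (3 * z ^ 2)
        - 108 * C₄ * ((3 * z ^ 2) * Real.log z + z ^ 3 * z⁻¹)
        + C₄ * (4 * (6 * z ^ 5) - 72 * (3 * z ^ 2) - 0)) z := by
    have hm1 := hpow.const_mul (-(108 * C₃))
    have hm2 := (hpow.mul hlog).const_mul (108 * C₄)
    have hm3 : HasDerivAt (fun w : ℝ => 4 * w ^ 6 - 72 * w ^ 3 - 81)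
        (4 * (6 * z ^ 5) - 72 * (3 * z ^ 2) - 0) z := by
      simpa using ((hpow6.const_mul 4).sub (hpow.const_mul 72)).sub_const 81
    exact (hm1.sub hm2).add (hm3.const_mul C₄)
  have hD2 : HasDerivAt (fun w : ℝ => 81 * (2 * w ^ 3 - 9) ^ 2)
      (81 * (2 * (2 * z ^ 3 - 9) ^ 1 * (2 * (3 * z ^ 2)))) z := by
    exact (((hpow.const_mul 2).sub_const 9).pow 2).const_mul 81
  have hD2ne : 81 * (2 * z ^ 3 - 9) ^ 2 ≠ 0 := by
    positivity
  have hF : HasDerivAt F _ z := hM.div hD2 hD2ne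
  have hF' : HasDerivAt F
      (4 * z *
        (C₃ * (z * (2 * z ^ 3 + 9) / (2 * z ^ 3 - 9) ^ 3)
          + C₄ * (z * (2 * z ^ 3 * Real.log z + 9 * Real.log z + 12)
              / (2 * z ^ 3 - 9) ^ 3))) z := by
    convert hF using 1
    field_simp
    ring
  exact hF'.congr_of_eventuallyEq hFf
end

section
/- Define the sequence a : N → N recursively as follows: a is the unique sequence satisfying that, starting from a_1 = 2, after the terms a_1, …, a_k have been constructed, the next k terms are a_1, …, a_{k−1}, a_k + 1. Then for every n ≥ 1, a_n equals the 2-adic valuation of 4n, i.e., a_n = ν₂(4n) = ν₂(n) + 2. -/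
/-!
By induction on `j`, `a n = ν₂ n + a 1` for all `1 ≤ n ≤ 2 ^ j`: the new term `a (2 ^ (j + 1))`
gains one over `a (2 ^ j)` exactly as `ν₂` does, and every other new term `a (2 ^ j + i)` copies
`a i` with `0 < i < 2 ^ j`, where `ν₂ (2 ^ j + i) = ν₂ i` by the ultrametric inequality.
-/

theorem padicValNat_pow_add_of_lt {p j i : ℕ} [hp : Fact p.Prime] (hi : i ≠ 0) (hij : i < p ^ j) :
    padicValNat p (p ^ j + i) = padicValNat p i := by
  have hlt : padicValNat p i < j :=
    (padicValNat_le_nat_log i).trans_lt (Nat.log_lt_of_lt_pow hi hij)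
  have : padicValRat p ((i : ℚ) + (p : ℚ) ^ j) = padicValRat p i := by
    apply padicValRat.add_eq_of_lt (by positivity) (by exact_mod_cast hi)
      (pow_ne_zero _ (by exact_mod_cast hp.out.ne_zero))
    rw [padicValRat.pow, padicValRat.self hp.out.one_lt, mul_one, ← padicValRat_of_nat]
    exact_mod_cast hlt
  rw [add_comm]
  exact_mod_cast this

theorem apply_eq_padicValNat_add_of_le_two_pow (a : ℕ → ℕ)
    (hcopy : ∀ j i : ℕ, 1 ≤ i → i < 2 ^ j → a (2 ^ j + i) = a i)
    (hdouble : ∀ j : ℕ, a (2 ^ (j + 1)) = a (2 ^ j) + 1) (j : ℕ) :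
    ∀ n, 1 ≤ n → n ≤ 2 ^ j → a n = padicValNat 2 n + a 1 := by
  induction j with
  | zero =>
    intro n hn hn1
    obtain rfl : n = 1 := by simp only [pow_zero] at hn1; omega
    simp
  | succ j ih =>
    intro n hn hnj
    rcases le_or_gt n (2 ^ j) with hle | hgt
    · exact ih n hn hle
    obtain rfl | hlt := hnj.eq_or_lt
    · rw [hdouble, ih _ Nat.one_le_two_pow le_rfl, padicValNat.prime_pow, padicValNat.prime_pow]
      ring
    · obtain ⟨i, rfl⟩ := Nat.exists_eq_add_of_le hgt.le
      have hi : i < 2 ^ j := by rw [pow_succ] at hlt; omega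
      rw [hcopy j i (by omega) hi, padicValNat_pow_add_of_lt (by omega) hi]
      exact ih i (by omega) hi.le

theorem apply_eq_padicValNat_add (a : ℕ → ℕ)
    (hcopy : ∀ j i : ℕ, 1 ≤ i → i < 2 ^ j → a (2 ^ j + i) = a i)
    (hdouble : ∀ j : ℕ, a (2 ^ (j + 1)) = a (2 ^ j) + 1) {n : ℕ} (hn : 1 ≤ n) :
    a n = padicValNat 2 n + a 1 :=
  apply_eq_padicValNat_add_of_le_two_pow a hcopy hdouble n n hn Nat.lt_two_pow_self.le

theorem padicValNat_four_mul {n : ℕ} (hn : n ≠ 0) : padicValNat 2 (4 * n) = padicValNat 2 n + 2 := by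
  rw [show (4 : ℕ) = 2 ^ 2 by norm_num, padicValNat.mul (by norm_num) hn, padicValNat.prime_pow,
    add_comm]

theorem a_seq_eq_padicValNat (a : ℕ → ℕ)
    (h1 : a 1 = 2)
    (hcopy : ∀ j i : ℕ, 1 ≤ i → i < 2 ^ j → a (2 ^ j + i) = a i)
    (hdouble : ∀ j : ℕ, a (2 ^ (j + 1)) = a (2 ^ j) + 1) :
    ∀ n : ℕ, 1 ≤ n →
      a n = padicValNat 2 (4 * n) ∧ padicValNat 2 (4 * n) = padicValNat 2 n + 2 := by
  intro n hn
  have h4 := padicValNat_four_mul (n := n) (by omega)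
  exact ⟨by rw [h4, apply_eq_padicValNat_add a hcopy hdouble hn, h1], h4⟩
end
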